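/- Let q_1, ..., q_r be multiplicatively independent nonzero integers. For every Y ≥ 1, the number of primes p for which the subgroup of (ℤ/pℤ)^× generated by the reductions of q_1, ..., q_r has at most Y elements is O(Y^{1+1/r}), where the implied constant may depend on q_1, ..., q_r. -/

import Mathlib

/-- Nonzero integers `q 0, ..., q (r-1)` are multiplicatively independent:
`q 0 ^ e 0 * ⋯ * q (r-1) ^ e (r-1) = 1` with integer exponents forces all `e i = 0`. -/
def MultIndep {r : ℕ} (q : Fin r → ℤ) : Prop :=
  ∀ e : Fin r → ℤ, (∏ i, (q i : ℚ) ^ (e i)) = 1 → e = 0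

/-- The subgroup of `(ℤ/pℤ)ˣ` generated by the reductions of the `q i`. -/
def genSubgroup {r : ℕ} (q : Fin r → ℤ) (p : ℕ) : Subgroup (ZMod p)ˣ :=
  Subgroup.closure {x : (ZMod p)ˣ | ∃ i, (x : ZMod p) = ((q i : ℤ) : ZMod p)}

/-!
Put `N = ⌊Y ^ (1/r)⌋`, so that `Y < (N + 1) ^ r`. If the group generated by the `q i` mod `p`
has at most `Y` elements, two distinct exponent vectors `e, f ∈ [0, N] ^ r` give the same
product `∏ q i ^ e i ≡ ∏ q i ^ f i (mod p)`. Cancelling common factors, `p` divides the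
numerator minus the denominator of the Laurent monomial `∏ q i ^ c i`, `c = e - f`, which is a
nonzero integer by multiplicative independence and has absolute value at most `2 B ^ N`, where
`B = ∏ |q i|`. Hence every such prime divides one of `(2N + 1) ^ r` nonzero integers, each with
at most `1 + B N` prime factors, and `(2N + 1) ^ r (1 + B N) = O(Y ^ (1 + 1/r))`.
-/

open Finset

theorem Nat.card_primeFactors_le_of_le_two_pow {n k : ℕ} (h : n ≤ 2 ^ k) :
    n.primeFactors.card ≤ k := by
  rcases eq_or_ne n 0 with rfl | hn
  · simp
  refine (Nat.pow_le_pow_iff_right one_lt_two).1 (le_trans ?_ h)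
  calc 2 ^ n.primeFactors.card ≤ ∏ p ∈ n.primeFactors, p :=
        pow_card_le_prod _ _ _ fun p hp => (Nat.prime_of_mem_primeFactors hp).two_le
    _ ≤ n := Nat.le_of_dvd (Nat.pos_of_ne_zero hn) (Nat.prod_primeFactors_dvd n)

theorem Subgroup.exists_ne_prod_pow_eq_of_card_lt {G ι : Type*} [CommGroup G] [Fintype ι]
    (H : Subgroup G) [Finite H] {u : ι → G} (hu : ∀ i, u i ∈ H) {N : ℕ}
    (hH : Nat.card H < (N + 1) ^ Fintype.card ι) :
    ∃ e f : ι → ℕ, e ≠ f ∧ (∀ i, e i ≤ N) ∧ (∀ i, f i ≤ N) ∧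
      ∏ i, u i ^ e i = ∏ i, u i ^ f i := by
  classical
  have : Fintype H := Fintype.ofFinite H
  let F : (ι → Fin (N + 1)) → H := fun e =>
    ⟨∏ i, u i ^ (e i : ℕ), H.prod_mem fun i _ => H.pow_mem (hu i) _⟩
  obtain ⟨e, f, hef, hF⟩ := Fintype.exists_ne_map_eq_of_card_lt F
    (by simpa [Nat.card_eq_fintype_card] using hH)
  exact ⟨fun i => e i, fun i => f i, fun h => hef (funext fun i => Fin.ext (congrFun h i)),
    fun i => Nat.le_of_lt_succ (e i).isLt, fun i => Nat.le_of_lt_succ (f i).isLt,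
    congrArg Subtype.val hF⟩

section LaurentMonomial

variable {ι R : Type*} [Fintype ι]

/-- The numerator minus the denominator of the Laurent monomial `∏ i, q i ^ c i`. -/
def laurentMonomialDiff [CommRing R] (q : ι → R) (c : ι → ℤ) : R :=
  ∏ i, q i ^ (c i).toNat - ∏ i, q i ^ (-c i).toNat

theorem prod_pow_sub_prod_pow_eq [CommRing R] (q : ι → R) (e f : ι → ℕ) :
    ∏ i, q i ^ e i - ∏ i, q i ^ f i =
      (∏ i, q i ^ min (e i) (f i)) * laurentMonomialDiff q (fun i => (e i : ℤ) - f i) := by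
  rw [laurentMonomialDiff, mul_sub, ← prod_mul_distrib, ← prod_mul_distrib]
  congr 1 <;> refine prod_congr rfl fun i _ => ?_ <;> rw [← pow_add] <;> congr 1 <;> omega

theorem laurentMonomialDiff_ne_zero {r : ℕ} {q : Fin r → ℤ} (hq : ∀ i, q i ≠ 0)
    (hind : MultIndep q) {c : Fin r → ℤ} (hc : c ≠ 0) : laurentMonomialDiff q c ≠ 0 := by
  intro h
  refine hc (hind c ?_)
  have hne : ∀ i, (q i : ℚ) ≠ 0 := fun i => Int.cast_ne_zero.2 (hq i)
  have hsplit : ∀ i, (q i : ℚ) ^ c i = (q i : ℚ) ^ (c i).toNat / (q i : ℚ) ^ (-c i).toNat :=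
    fun i => by rw [← zpow_natCast, ← zpow_natCast, ← zpow_sub₀ (hne i), Int.toNat_sub_toNat_neg]
  have hQ : ∏ i, (q i : ℚ) ^ (c i).toNat = ∏ i, (q i : ℚ) ^ (-c i).toNat := by
    exact_mod_cast sub_eq_zero.1 h
  rw [prod_congr rfl fun i _ => hsplit i, prod_div_distrib, hQ,
    div_self (prod_ne_zero_iff.2 fun i _ => pow_ne_zero _ (hne i))]

theorem natAbs_prod_pow_le {q : ι → ℤ} (hq : ∀ i, q i ≠ 0) {a : ι → ℕ} {N : ℕ}
    (ha : ∀ i, a i ≤ N) : (∏ i, q i ^ a i).natAbs ≤ (∏ i, (q i).natAbs) ^ N := by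
  calc (∏ i, q i ^ a i).natAbs = ∏ i, (q i).natAbs ^ a i :=
        (map_prod Int.natAbsHom _ univ).trans (prod_congr rfl fun i _ => Int.natAbs_pow _ _)
    _ ≤ ∏ i, (q i).natAbs ^ N :=
        prod_le_prod' fun i _ => Nat.pow_le_pow_right (Int.natAbs_pos.2 (hq i)) (ha i)
    _ = _ := prod_pow _ _ _

theorem card_primeFactors_laurentMonomialDiff_le {q : ι → ℤ} (hq : ∀ i, q i ≠ 0)
    {c : ι → ℤ} {N : ℕ} (hc : ∀ i, |c i| ≤ N) :
    (laurentMonomialDiff q c).natAbs.primeFactors.card ≤ 1 + (∏ i, (q i).natAbs) * N := by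
  set B := ∏ i, (q i).natAbs
  have hcN : ∀ i, -(N : ℤ) ≤ c i ∧ c i ≤ N := fun i => abs_le.1 (hc i)
  apply Nat.card_primeFactors_le_of_le_two_pow
  calc (laurentMonomialDiff q c).natAbs ≤ B ^ N + B ^ N :=
        (Int.natAbs_sub_le _ _).trans <| add_le_add
          (natAbs_prod_pow_le hq fun i => by have := hcN i; omega)
          (natAbs_prod_pow_le hq fun i => by have := hcN i; omega)
    _ ≤ 2 ^ (1 + B * N) := by
        rw [pow_add, pow_mul]
        have := Nat.pow_le_pow_left B.lt_two_pow_self.le N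
        omega

noncomputable def laurentMonomialDiffPrimes [DecidableEq ι] (q : ι → ℤ) (N : ℕ) : Finset ℕ :=
  (Fintype.piFinset fun _ => Icc (-(N : ℤ)) N).biUnion
    fun c => (laurentMonomialDiff q c).natAbs.primeFactors

theorem card_laurentMonomialDiffPrimes_le [DecidableEq ι] {q : ι → ℤ} (hq : ∀ i, q i ≠ 0)
    (N : ℕ) : (laurentMonomialDiffPrimes q N).card ≤
      (2 * N + 1) ^ Fintype.card ι * (1 + (∏ i, (q i).natAbs) * N) := by
  rw [laurentMonomialDiffPrimes]
  refine card_biUnion_le.trans <|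
    (sum_le_card_nsmul _ _ (1 + (∏ i, (q i).natAbs) * N) fun c hc => ?_).trans ?_
  · exact card_primeFactors_laurentMonomialDiff_le hq fun i =>
      abs_le.2 (mem_Icc.1 (Fintype.mem_piFinset.1 hc i))
  · simp only [Fintype.card_piFinset, Int.card_Icc, prod_const, card_univ, smul_eq_mul]
    exact le_of_eq (by congr 2; omega)

end LaurentMonomial

theorem exists_dvd_laurentMonomialDiff {r : ℕ} {q : Fin r → ℤ} {p : ℕ} (hp : p.Prime)
    (hpq : ¬ (p : ℤ) ∣ ∏ i, q i) {N : ℕ} (hcard : Nat.card (genSubgroup q p) < (N + 1) ^ r) :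
    ∃ c : Fin r → ℤ, c ≠ 0 ∧ (∀ i, |c i| ≤ N) ∧ (p : ℤ) ∣ laurentMonomialDiff q c := by
  have := Fact.mk hp
  have hqp : ∀ i, (q i : ZMod p) ≠ 0 := fun i h =>
    hpq <| ((ZMod.intCast_zmod_eq_zero_iff_dvd _ p).1 h).trans (dvd_prod_of_mem q (mem_univ i))
  obtain ⟨e, f, hef, he, hf, heq⟩ :=
    (genSubgroup q p).exists_ne_prod_pow_eq_of_card_lt (u := fun i => Units.mk0 _ (hqp i))
      (fun i => Subgroup.subset_closure ⟨i, rfl⟩) (by simpa using hcard)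
  refine ⟨fun i => (e i : ℤ) - f i, fun h => hef (funext fun i => ?_), fun i => ?_, ?_⟩
  · simpa [sub_eq_zero] using congrFun h i
  · have := he i
    have := hf i
    show |(e i : ℤ) - f i| ≤ N
    rw [abs_le]
    constructor <;> omega
  have hZ : ((∏ i, q i ^ e i - ∏ i, q i ^ f i : ℤ) : ZMod p) = 0 := by
    have := congrArg Units.val heq
    simp only [Units.coe_prod, Units.val_pow_eq_pow_val, Units.val_mk0] at this
    push_cast
    rw [this, sub_self]
  rw [prod_pow_sub_prod_pow_eq, Int.cast_mul, mul_eq_zero] at hZ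
  rw [← ZMod.intCast_zmod_eq_zero_iff_dvd]
  exact hZ.resolve_left (by push_cast; exact prod_ne_zero_iff.2 fun i _ => pow_ne_zero _ (hqp i))

theorem mem_laurentMonomialDiffPrimes_of_card_lt {r : ℕ} {q : Fin r → ℤ}
    (hq : ∀ i, q i ≠ 0) (hind : MultIndep q) {p : ℕ} (hp : p.Prime)
    (hpq : ¬ (p : ℤ) ∣ ∏ i, q i) {N : ℕ} (hcard : Nat.card (genSubgroup q p) < (N + 1) ^ r) :
    p ∈ laurentMonomialDiffPrimes q N := by
  obtain ⟨c, hc0, hcN, hdvd⟩ := exists_dvd_laurentMonomialDiff hp hpq hcard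
  rw [laurentMonomialDiffPrimes, mem_biUnion]
  exact ⟨c, Fintype.mem_piFinset.2 fun i => mem_Icc.2 (abs_le.1 (hcN i)),
    Nat.mem_primeFactors.2 ⟨hp, Int.natCast_dvd.1 hdvd,
      Int.natAbs_ne_zero.2 (laurentMonomialDiff_ne_zero hq hind hc0)⟩⟩

theorem lt_floor_rpow_inv_add_one_pow {r : ℕ} (hr : r ≠ 0) {Y : ℝ} (hY : 0 ≤ Y) :
    Y < ((⌊Y ^ (r : ℝ)⁻¹⌋₊ : ℝ) + 1) ^ r :=
  calc Y = (Y ^ (r : ℝ)⁻¹) ^ r := (Real.rpow_inv_natCast_pow hY hr).symm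
    _ < _ := pow_lt_pow_left₀ (Nat.lt_floor_add_one _) (by positivity) hr

theorem two_mul_add_one_pow_mul_le {r B N : ℕ} {x : ℝ} (hx : 1 ≤ x) (hN : N ≤ x) :
    ((2 * N + 1) ^ r * (1 + B * N) : ℝ) ≤ 3 ^ r * (1 + B) * x ^ (r + 1) := by
  have h3 : (2 * N + 1 : ℝ) ≤ 3 * x := by linarith
  have hB : (1 + B * N : ℝ) ≤ (1 + B) * x := by
    nlinarith [mul_le_mul_of_nonneg_left hN (Nat.cast_nonneg B : (0 : ℝ) ≤ B)]
  calc ((2 * N + 1) ^ r * (1 + B * N) : ℝ) ≤ (3 * x) ^ r * ((1 + B) * x) :=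
        mul_le_mul (pow_le_pow_left₀ (by positivity) h3 r) hB (by positivity) (by positivity)
    _ = 3 ^ r * (1 + B) * x ^ (r + 1) := by ring

theorem stmt1 {r : ℕ} (hr : 0 < r) (q : Fin r → ℤ) (hq : ∀ i, q i ≠ 0)
    (hind : MultIndep q) :
    ∃ C : ℝ, 0 < C ∧ ∀ Y : ℝ, 1 ≤ Y →
      {p : ℕ | p.Prime ∧ ¬ (p : ℤ) ∣ (∏ i, q i) ∧
        (Nat.card (genSubgroup q p) : ℝ) ≤ Y}.Finite ∧
      (Nat.card {p : ℕ | p.Prime ∧ ¬ (p : ℤ) ∣ (∏ i, q i) ∧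
        (Nat.card (genSubgroup q p) : ℝ) ≤ Y} : ℝ) ≤ C * Y ^ (1 + (r : ℝ)⁻¹) := by
  set B := ∏ i, (q i).natAbs
  refine ⟨3 ^ r * (1 + B), by positivity, fun Y hY => ?_⟩
  set x := Y ^ (r : ℝ)⁻¹
  set T := laurentMonomialDiffPrimes q ⌊x⌋₊
  have hsub : {p : ℕ | p.Prime ∧ ¬ (p : ℤ) ∣ (∏ i, q i) ∧
      (Nat.card (genSubgroup q p) : ℝ) ≤ Y} ⊆ T := fun p ⟨hp, hpq, hcard⟩ =>
    mem_laurentMonomialDiffPrimes_of_card_lt hq hind hp hpq <| by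
      exact_mod_cast hcard.trans_lt (lt_floor_rpow_inv_add_one_pow hr.ne' (by linarith))
  refine ⟨T.finite_toSet.subset hsub, ?_⟩
  have hYx : Y ^ (1 + (r : ℝ)⁻¹) = x ^ (r + 1) := by
    rw [Real.rpow_add (by linarith), Real.rpow_one, pow_succ,
      Real.rpow_inv_natCast_pow (by linarith) hr.ne']
  calc (Nat.card _ : ℝ) ≤ T.card := by
        exact_mod_cast (Nat.card_mono T.finite_toSet hsub).trans (Nat.card_eq_finsetCard T).le
    _ ≤ ((2 * ⌊x⌋₊ + 1) ^ r * (1 + B * ⌊x⌋₊) : ℕ) := by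
        exact_mod_cast (card_laurentMonomialDiffPrimes_le hq _).trans_eq (by rw [Fintype.card_fin])
    _ ≤ 3 ^ r * (1 + B) * x ^ (r + 1) := by
        push_cast
        exact two_mul_add_one_pow_mul_le (Real.one_le_rpow hY (by positivity))
          (Nat.floor_le (by positivity))
    _ = _ := by rw [hYx]
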